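/- Let (X, u) be an ultrametric space whose partially ordered value set Γ is countable. Then the ultrametric ball space (X, 𝓑_u) is chain union stable. -/
import Mathlib


open Set

section BasicDefs

variable {X : Type*}

/-- `cu 𝓑` is the family of all unions of nonempty inclusion-chains contained in `𝓑`. -/
def cu (B : Set (Set X)) : Set (Set X) :=
  {U | ∃ C : Set (Set X), C ⊆ B ∧ C.Nonempty ∧ IsChain (· ⊆ ·) C ∧ U = ⋃₀ C}

/-- A family of balls is chain union closed if it coincides with its family of chain unions. -/
def ChainUnionClosed (B : Set (Set X)) : Prop := cu B = B

/-- A ball space is chain union stable if `cu 𝓑` is chain union closed. -/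
def ChainUnionStable (B : Set (Set X)) : Prop := ChainUnionClosed (cu B)

/-- Spherical completeness: every nonempty chain of balls has nonempty intersection. -/
def SphericallyComplete (B : Set (Set X)) : Prop :=
  ∀ C : Set (Set X), C ⊆ B → C.Nonempty → IsChain (· ⊆ ·) C → (⋂₀ C).Nonempty

/-- A ball space: a nonempty collection of nonempty subsets (of a nonempty set `X`). -/
def IsBallSpace (B : Set (Set X)) : Prop := B.Nonempty ∧ ∀ S ∈ B, S.Nonempty

end BasicDefs

section UltraDefs

variable {X : Type*} {Γ : Type*}

/-- An ultrametric on `X` with values in a poset `Γ` with bottom element `⊥`: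
(U1) `u x y = ⊥ ↔ x = y`, (U2) the ultrametric triangle law, (U3) symmetry. -/
def IsUltrametric [PartialOrder Γ] [OrderBot Γ] (u : X → X → Γ) : Prop :=
  (∀ x y, u x y = ⊥ ↔ x = y) ∧
  (∀ x y z γ, u x y ≤ γ → u y z ≤ γ → u x z ≤ γ) ∧
  (∀ x y, u x y = u y x)

/-- The precise ultrametric ball `B(x,y) = {z | u x z ≤ u x y}`. -/
def uball [PartialOrder Γ] (u : X → X → Γ) (x y : X) : Set X :=
  {z | u x z ≤ u x y}

/-- The ultrametric ball space: the family of all precise balls. -/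
def uballSpace [PartialOrder Γ] (u : X → X → Γ) : Set (Set X) :=
  {B | ∃ x y, B = uball u x y}

end UltraDefs

section AuxLemmas

variable {X : Type*} {Γ : Type*} [PartialOrder Γ] [OrderBot Γ]

/-- In a chain, any two members have a common upper bound in the chain. -/
lemma chain_pair_upper {α : Type*} {C : Set (Set α)} (hC : IsChain (· ⊆ ·) C)
    {s t : Set α} (hs : s ∈ C) (ht : t ∈ C) : ∃ r ∈ C, s ⊆ r ∧ t ⊆ r := by
  rcases eq_or_ne s t with rfl | h
  · exact ⟨s, hs, subset_rfl, subset_rfl⟩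
  · rcases hC hs ht h with h' | h'
    · exact ⟨t, ht, h', subset_rfl⟩
    · exact ⟨s, hs, subset_rfl, h'⟩

lemma uball_self_mem (u : X → X → Γ) (hu : IsUltrametric u) (a b : X) :
    a ∈ uball u a b := by
  have h : u a a = ⊥ := (hu.1 a a).2 rfl
  show u a a ≤ u a b
  rw [h]; exact bot_le

lemma uball_right_mem (u : X → X → Γ) (a b : X) : b ∈ uball u a b := le_rfl

/-- Lemma A: a precise ball with both defining points inside another precise ball
is contained in that ball. -/
lemma uball_subset_of_mem (u : X → X → Γ) (hu : IsUltrametric u) {a b c d : X}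
    (ha : a ∈ uball u c d) (hb : b ∈ uball u c d) : uball u a b ⊆ uball u c d := by
  obtain ⟨h1, h2, h3⟩ := hu
  have hab : u a b ≤ u c d := h2 a c b _ (by rw [h3]; exact ha) hb
  intro w hw
  have hw' : u a w ≤ u c d := le_trans hw hab
  exact h2 c a w _ ha hw'

/-- A precise ball containing `x` is determined by `x` and the value `u a b`. -/
lemma uball_recenter (u : X → X → Γ) (hu : IsUltrametric u) {a b x : X}
    (hx : x ∈ uball u a b) : uball u a b = {w | u x w ≤ u a b} := by
  obtain ⟨h1, h2, h3⟩ := hu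
  ext w
  constructor
  · intro hw; exact h2 x a w _ (by rw [h3]; exact hx) hw
  · intro hw; exact h2 a x w _ hx hw

/-- A countable nonempty directed family of sets is the union of a chain
drawn from the family. -/
lemma chain_of_directed {α : Type*} (F : Set (Set α)) (hc : F.Countable) (hne : F.Nonempty)
    (hdir : ∀ B ∈ F, ∀ B' ∈ F, ∃ M ∈ F, B ⊆ M ∧ B' ⊆ M) :
    ∃ C : Set (Set α), C ⊆ F ∧ C.Nonempty ∧ IsChain (· ⊆ ·) C ∧ ⋃₀ C = ⋃₀ F := by
  obtain ⟨f, hf⟩ := Set.Countable.exists_eq_range hc hne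
  have hfF : ∀ n, f n ∈ F := fun n => hf ▸ Set.mem_range_self n
  choose! M hMF hM1 hM2 using hdir
  let g : ℕ → Set α := fun n => Nat.rec (f 0) (fun n S => M S (f (n + 1))) n
  have hg0 : g 0 = f 0 := rfl
  have hgs : ∀ n, g (n + 1) = M (g n) (f (n + 1)) := fun n => rfl
  have hgF : ∀ n, g n ∈ F := by
    intro n
    induction n with
    | zero => rw [hg0]; exact hfF 0
    | succ n ih => rw [hgs]; exact hMF _ ih _ (hfF _)
  have hstep : ∀ n, g n ⊆ g (n + 1) := by
    intro n; rw [hgs]; exact hM1 _ (hgF n) _ (hfF _)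
  have hfg : ∀ n, f n ⊆ g n := by
    intro n
    cases n with
    | zero => rw [hg0]
    | succ n => rw [hgs]; exact hM2 _ (hgF n) _ (hfF _)
  have hmono : Monotone g := monotone_nat_of_le_succ hstep
  refine ⟨Set.range g, ?_, ⟨g 0, ⟨0, rfl⟩⟩, ?_, ?_⟩
  · rintro B ⟨n, rfl⟩; exact hgF n
  · rintro B ⟨m, rfl⟩ B' ⟨n, rfl⟩ _
    rcases le_total m n with h | h
    · exact Or.inl (hmono h)
    · exact Or.inr (hmono h)
  · apply subset_antisymm
    · apply Set.sUnion_subset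
      rintro B ⟨n, rfl⟩
      exact Set.subset_sUnion_of_mem (hgF n)
    · intro w hw
      obtain ⟨B, hB, hwB⟩ := hw
      rw [hf] at hB
      obtain ⟨n, rfl⟩ := hB
      exact ⟨g n, ⟨n, rfl⟩, hfg n hwB⟩

end AuxLemmas

/-- Theorem 1.5: the ball space of an ultrametric space with a countable partially ordered
value set is chain union stable. -/
theorem ultrametric_countable_chainUnionStable {X Γ : Type*} [Nonempty X]
    [PartialOrder Γ] [OrderBot Γ] [Countable Γ] (u : X → X → Γ) (hu : IsUltrametric u) :
    ChainUnionStable (uballSpace u) := by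
  unfold ChainUnionStable ChainUnionClosed
  apply Set.Subset.antisymm
  · rintro W ⟨L, hLsub, hLne, hLchain, rfl⟩
    -- Helper: inside any member of `L`, two points lie in a common precise ball inside it.
    have H1 : ∀ U ∈ L, ∀ a b : X, a ∈ U → b ∈ U →
        ∃ M ∈ uballSpace u, a ∈ M ∧ b ∈ M ∧ M ⊆ U := by
      intro U hU a b ha hb
      obtain ⟨C, hCsub, hCne, hCchain, rfl⟩ := hLsub hU
      obtain ⟨Ma, hMaC, haMa⟩ := ha
      obtain ⟨Mb, hMbC, hbMb⟩ := hb
      obtain ⟨N, hNC, h1', h2'⟩ := chain_pair_upper hCchain hMaC hMbC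
      exact ⟨N, hCsub hNC, h1' haMa, h2' hbMb, Set.subset_sUnion_of_mem hNC⟩
    -- Helper: two points of the union lie in a common member of `L`.
    have H2 : ∀ a b : X, a ∈ ⋃₀ L → b ∈ ⋃₀ L → ∃ U ∈ L, a ∈ U ∧ b ∈ U := by
      rintro a b ⟨Ua, hUa, ha⟩ ⟨Ub, hUb, hb⟩
      obtain ⟨U, hU, hsa, hsb⟩ := chain_pair_upper hLchain hUa hUb
      exact ⟨U, hU, hsa ha, hsb hb⟩
    -- pick a point x in the union
    obtain ⟨U0, hU0⟩ := hLne
    have hU0ne : U0.Nonempty := by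
      obtain ⟨C, hCsub, ⟨B0, hB0⟩, hCchain, rfl⟩ := hLsub hU0
      obtain ⟨a, b, hab⟩ := hCsub hB0
      exact ⟨a, Set.mem_sUnion_of_mem (by rw [hab]; exact uball_self_mem u hu a b) hB0⟩
    obtain ⟨x, hx⟩ := hU0ne
    have hxW : x ∈ ⋃₀ L := ⟨U0, hU0, hx⟩
    -- the family of all balls containing x and contained in the union
    set F : Set (Set X) := {B | B ∈ uballSpace u ∧ x ∈ B ∧ B ⊆ ⋃₀ L} with hFdef
    have HF : ∀ w ∈ ⋃₀ L, ∃ M ∈ F, w ∈ M := by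
      intro w hw
      obtain ⟨U, hU, hxU, hwU⟩ := H2 x w hxW hw
      obtain ⟨M, hMball, hxM, hwM, hMU⟩ := H1 U hU x w hxU hwU
      exact ⟨M, ⟨hMball, hxM, fun z hz => ⟨U, hU, hMU hz⟩⟩, hwM⟩
    have hFne : F.Nonempty := by
      obtain ⟨M, hM, -⟩ := HF x hxW
      exact ⟨M, hM⟩
    have hFunion : ⋃₀ F = ⋃₀ L := by
      apply subset_antisymm
      · exact Set.sUnion_subset fun B hB => hB.2.2
      · intro w hw
        obtain ⟨M, hM, hwM⟩ := HF w hw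
        exact ⟨M, hM, hwM⟩
    have hFcount : F.Countable := by
      have hsub : F ⊆ Set.range (fun γ : Γ => {w | u x w ≤ γ}) := by
        rintro B ⟨⟨a, b, rfl⟩, hxB, -⟩
        exact ⟨u a b, (uball_recenter u hu hxB).symm⟩
      exact (Set.countable_range _).mono hsub
    have hFdir : ∀ B ∈ F, ∀ B' ∈ F, ∃ M ∈ F, B ⊆ M ∧ B' ⊆ M := by
      rintro B ⟨⟨a, b, rfl⟩, hxB, hBW⟩ B' ⟨⟨a', b', rfl⟩, hxB', hB'W⟩
      have haW : a ∈ ⋃₀ L := hBW (uball_self_mem u hu a b)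
      have hbW : b ∈ ⋃₀ L := hBW (uball_right_mem u a b)
      have ha'W : a' ∈ ⋃₀ L := hB'W (uball_self_mem u hu a' b')
      have hb'W : b' ∈ ⋃₀ L := hB'W (uball_right_mem u a' b')
      obtain ⟨U1, hU1, haU1, hbU1⟩ := H2 a b haW hbW
      obtain ⟨U2, hU2, ha'U2, hb'U2⟩ := H2 a' b' ha'W hb'W
      obtain ⟨U, hU, hs1, hs2⟩ := chain_pair_upper hLchain hU1 hU2
      -- all four points lie in U; find one ball of the chain representing U
      -- that contains all four points
      obtain ⟨C, hCsub, hCne, hCchain, hUeq⟩ := hLsub hU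
      have haU : a ∈ ⋃₀ C := hUeq ▸ hs1 haU1
      have hbU : b ∈ ⋃₀ C := hUeq ▸ hs1 hbU1
      have ha'U : a' ∈ ⋃₀ C := hUeq ▸ hs2 ha'U2
      have hb'U : b' ∈ ⋃₀ C := hUeq ▸ hs2 hb'U2
      obtain ⟨M1, hM1C, haM1⟩ := haU
      obtain ⟨M2, hM2C, hbM2⟩ := hbU
      obtain ⟨M3, hM3C, ha'M3⟩ := ha'U
      obtain ⟨M4, hM4C, hb'M4⟩ := hb'U
      obtain ⟨N1, hN1, h11, h12⟩ := chain_pair_upper hCchain hM1C hM2C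
      obtain ⟨N2, hN2, h21, h22⟩ := chain_pair_upper hCchain hM3C hM4C
      obtain ⟨N, hNC, hn1, hn2⟩ := chain_pair_upper hCchain hN1 hN2
      obtain ⟨c, d, hNcd⟩ := hCsub hNC
      have hBN : uball u a b ⊆ uball u c d :=
        uball_subset_of_mem u hu (hNcd ▸ hn1 (h11 haM1)) (hNcd ▸ hn1 (h12 hbM2))
      have hB'N : uball u a' b' ⊆ uball u c d :=
        uball_subset_of_mem u hu (hNcd ▸ hn2 (h21 ha'M3)) (hNcd ▸ hn2 (h22 hb'M4))
      have hNW : uball u c d ⊆ ⋃₀ L := fun z hz =>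
        ⟨U, hU, hUeq ▸ Set.subset_sUnion_of_mem hNC (hNcd ▸ hz : z ∈ N)⟩
      exact ⟨uball u c d, ⟨⟨c, d, rfl⟩, hBN hxB, hNW⟩, hBN, hB'N⟩
    obtain ⟨C, hCsub, hCne, hCchain, hCun⟩ := chain_of_directed F hFcount hFne hFdir
    exact ⟨C, fun B hB => (hCsub hB).1, hCne, hCchain, (hCun.trans hFunion).symm⟩
  · rintro U hU
    exact ⟨{U}, by simpa using hU, ⟨U, rfl⟩,
      Set.Subsingleton.isChain Set.subsingleton_singleton, (Set.sUnion_singleton U).symm⟩
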